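/- Let R be a left noetherian ring and let A and B be injective R-modules. If there exist injective R-linear maps f : A → B and g : B → A, then A and B are isomorphic as R-modules. -/

import Mathlib

/-!
Injective submodules are direct summands, so the two embeddings give `B ≅ A × Y` and
`A ≅ B × X ≅ Y × (A × X)` with `Y` injective; it remains to see that `A ≅ Y × A` whenever
`A ≅ Y × Z` and `A` embeds into `Z`. Iterating the resulting injective endomorphism
`θ : A → Z → Y × Z ≅ A` places the copies `θⁿ(Y)` independently inside `A`, so `A` contains
`⊕ₙ Y`. Over a left noetherian ring this direct sum is again injective (Baer's criterion: a
finitely generated ideal only reaches finitely many coordinates), hence a direct summand,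
`A ≅ (⊕ₙ Y) × E`, and the shift `⊕ₙ Y ≅ Y × ⊕ₙ Y` gives `A ≅ Y × A`.
-/

universe u

/-- `E` is injective: every homomorphism `g : A → E` extends along every
injective linear map `f : A → B`. -/
def ModuleInjective (R : Type u) [Ring R] (E : Type u) [AddCommGroup E] [Module R E] : Prop :=
  ∀ (A B : Type u) [AddCommGroup A] [Module R A] [AddCommGroup B] [Module R B]
    (f : A →ₗ[R] B), Function.Injective f →
    ∀ g : A →ₗ[R] E, ∃ h : B →ₗ[R] E, h.comp f = g

theorem moduleInjective_iff_injective {R E : Type u} [Ring R] [AddCommGroup E] [Module R E] :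
    ModuleInjective R E ↔ Module.Injective R E :=
  ⟨fun h => ⟨fun X Y _ _ _ _ f hf g => (h X Y f hf g).imp fun _ hh => LinearMap.congr_fun hh⟩,
   fun h _ _ _ _ _ _ f hf g => (h.out f hf g).imp fun _ hh => LinearMap.ext hh⟩

open LinearMap

section Shift

variable (R M : Type*) [Ring R] [AddCommGroup M] [Module R M]

noncomputable def Finsupp.natShiftEquiv : (ℕ →₀ M) ≃ₗ[R] M × (ℕ →₀ M) :=
  Finsupp.domLCongr Equiv.natEquivNatSumPUnit.{0} ≪≫ₗ Finsupp.sumFinsuppLEquivProdFinsupp R ≪≫ₗ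
    LinearEquiv.prodComm R _ _ ≪≫ₗ
      (Finsupp.uniqueLinearEquiv R M PUnit.unit.{1}).prodCongr (LinearEquiv.refl R _)

variable {R M}

@[simp] theorem Finsupp.natShiftEquiv_apply_fst (v : ℕ →₀ M) :
    (Finsupp.natShiftEquiv R M v).1 = v 0 := by
  simp [Finsupp.natShiftEquiv, Finsupp.domLCongr_apply]; rfl

@[simp] theorem Finsupp.natShiftEquiv_apply_snd (v : ℕ →₀ M) (n : ℕ) :
    (Finsupp.natShiftEquiv R M v).2 n = v (n + 1) := by
  simp [Finsupp.natShiftEquiv, Finsupp.domLCongr_apply]; rfl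

theorem Finsupp.natShiftEquiv_single_zero (y : M) :
    Finsupp.natShiftEquiv R M (Finsupp.single 0 y) = (y, 0) := by
  ext n <;> simp

theorem Finsupp.natShiftEquiv_single_succ (n : ℕ) (y : M) :
    Finsupp.natShiftEquiv R M (Finsupp.single (n + 1) y) = (0, Finsupp.single n y) := by
  ext m <;> simp [Finsupp.single_apply]

end Shift

section Iterates

variable {R A Y : Type*} [Ring R] [AddCommGroup A] [Module R A] [AddCommGroup Y] [Module R Y]

noncomputable def sumIterates (θ : A →ₗ[R] A) (j : Y →ₗ[R] A) : (ℕ →₀ Y) →ₗ[R] A :=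
  Finsupp.lsum ℕ fun n => (θ ^ n) ∘ₗ j

theorem sumIterates_apply_single (θ : A →ₗ[R] A) (j : Y →ₗ[R] A) (n : ℕ) (y : Y) :
    sumIterates θ j (Finsupp.single n y) = (θ ^ n) (j y) := by
  simp [sumIterates]

theorem sumIterates_apply_eq_add (θ : A →ₗ[R] A) (j : Y →ₗ[R] A) (v : ℕ →₀ Y) :
    sumIterates θ j v =
      j (Finsupp.natShiftEquiv R Y v).1 + θ (sumIterates θ j (Finsupp.natShiftEquiv R Y v).2) := by
  induction v using Finsupp.induction_linear with
  | zero => simp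
  | add v w hv hw => simp only [map_add, Prod.fst_add, Prod.snd_add, hv, hw]; abel
  | single n y =>
    cases n with
    | zero => simp [Finsupp.natShiftEquiv_single_zero, sumIterates_apply_single]
    | succ n =>
      simp [Finsupp.natShiftEquiv_single_succ, sumIterates_apply_single, pow_succ']

theorem sumIterates_injective {θ : A →ₗ[R] A} {j : Y →ₗ[R] A} (hθ : Function.Injective θ)
    (hj : Function.Injective j) (hdisj : Disjoint (range j) (range θ)) :
    Function.Injective (sumIterates θ j) := by
  rw [← ker_eq_bot, ker_eq_bot']
  have head_tail_eq_zero : ∀ v, sumIterates θ j v = 0 →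
      (Finsupp.natShiftEquiv R Y v).1 = 0 ∧
        sumIterates θ j (Finsupp.natShiftEquiv R Y v).2 = 0 := by
    intro v hv
    rw [sumIterates_apply_eq_add] at hv
    obtain ⟨h₁, h₂⟩ := Submodule.disjoint_iff_add_eq_zero.1 hdisj (mem_range_self _ _)
      (mem_range_self _ _) hv
    exact ⟨hj (h₁.trans j.map_zero.symm), hθ (h₂.trans θ.map_zero.symm)⟩
  have coeff_eq_zero : ∀ n v, sumIterates θ j v = 0 → v n = 0 := by
    intro n
    induction n with
    | zero => intro v hv; simpa using (head_tail_eq_zero v hv).1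
    | succ n ih => intro v hv; simpa using ih _ (head_tail_eq_zero v hv).2
  exact fun v hv => Finsupp.ext fun n => coeff_eq_zero n v hv

end Iterates

universe v w

section Injective

variable {R : Type u} [Ring R]

theorem Module.Injective.of_retract {M N : Type v} [AddCommGroup M] [Module R M]
    [AddCommGroup N] [Module R N] [Module.Injective R M] (i : N →ₗ[R] M) (r : M →ₗ[R] N)
    (hri : r ∘ₗ i = LinearMap.id) : Module.Injective R N where
  out _ _ _ _ _ _ f hf g := by
    obtain ⟨h, hh⟩ := Module.Injective.out f hf (i ∘ₗ g)
    exact ⟨r ∘ₗ h, fun x => by rw [LinearMap.comp_apply, hh]; exact LinearMap.congr_fun hri (g x)⟩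

theorem Module.Injective.of_isCompl_right {M : Type v} [AddCommGroup M] [Module R M]
    [Module.Injective R M] {p q : Submodule R M} (h : IsCompl p q) : Module.Injective R q :=
  .of_retract q.subtype (q.projectionOnto p h.symm) (q.projectionOnto_comp_subtype h.symm)

theorem Module.Injective.exists_isCompl_range {M N : Type v} [AddCommGroup M] [Module R M]
    [AddCommGroup N] [Module R N] [Module.Injective R M] (f : M →ₗ[R] N)
    (hf : Function.Injective f) : ∃ Y : Submodule R N, IsCompl (range f) Y := by
  obtain ⟨r, hr⟩ := Module.Injective.out f hf LinearMap.id
  refine ⟨ker (f.rangeRestrict ∘ₗ r), isCompl_of_proj ?_⟩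
  rintro ⟨_, x, rfl⟩
  ext
  simp [hr]

noncomputable def LinearEquiv.prodOfIsComplRange {M N : Type*} [AddCommGroup M] [Module R M]
    [AddCommGroup N] [Module R N] {f : M →ₗ[R] N} (hf : Function.Injective f) {Y : Submodule R N}
    (h : IsCompl (range f) Y) : (M × Y) ≃ₗ[R] N :=
  (LinearEquiv.ofInjective f hf).prodCongr (LinearEquiv.refl R Y) ≪≫ₗ
    Submodule.prodEquivOfIsCompl _ _ h

theorem Finsupp.exists_finset_range_le_supported {M ι C : Type*} [AddCommGroup M] [Module R M]
    [AddCommGroup C] [Module R C] [Module.Finite R M] (g : M →ₗ[R] ι →₀ C) :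
    ∃ S : Finset ι, range g ≤ Finsupp.supported C R ↑S := by
  classical
  obtain ⟨t, ht⟩ := (Module.Finite.fg_top (R := R) (M := M)).map g
  refine ⟨t.biUnion Finsupp.support, ?_⟩
  rw [range_eq_map, ← ht, Submodule.span_le]
  intro v hv
  exact (Finsupp.mem_supported R v).2 (Finset.coe_subset.2 (Finset.subset_biUnion_of_mem _ hv))

instance Module.Injective.finsupp [IsNoetherianRing R] {ι : Type w} {C : Type v}
    [AddCommGroup C] [Module R C] [Small.{v} R] [Module.Injective R C] :
    Module.Injective R (ι →₀ C) := by
  have : Small.{max v w} R := small_lift R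
  refine Module.Baer.injective fun I g => ?_
  obtain ⟨S, hS⟩ := Finsupp.exists_finset_range_le_supported g
  have hBaer : Module.Baer R (Finsupp.supported C R (S : Set ι)) :=
    (Module.Baer.of_injective inferInstance).of_equiv
      (Finsupp.supportedEquivFinsupp (M := C) (R := R) (S : Set ι) ≪≫ₗ
        Finsupp.linearEquivFunOnFinite R C S).symm
  obtain ⟨h, hh⟩ := hBaer I (g.codRestrict _ fun x => hS (mem_range_self g x))
  exact ⟨(Finsupp.supported C R S).subtype ∘ₗ h, fun x hx => by simp [hh x hx]⟩

theorem nonempty_linearEquiv_prod_self_of_embedding [IsNoetherianRing R] [Small.{v} R]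
    {A Y : Type v} {Z : Type*} [AddCommGroup A] [Module R A] [AddCommGroup Y] [Module R Y]
    [AddCommGroup Z] [Module R Z] [Module.Injective R Y] (e : A ≃ₗ[R] Y × Z) (i : A →ₗ[R] Z)
    (hi : Function.Injective i) : Nonempty (A ≃ₗ[R] Y × A) := by
  set θ : A →ₗ[R] A := e.symm ∘ₗ inr R Y Z ∘ₗ i
  set j : Y →ₗ[R] A := e.symm ∘ₗ inl R Y Z
  have hdisj : Disjoint (range j) (range θ) := by
    refine (Submodule.disjoint_map e.symm.injective (disjoint_inl_inr (R := R))).mono ?_ ?_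
    · rw [range_comp]
    · rw [range_comp]; exact Submodule.map_mono (range_comp_le_range _ _)
  have hΦ : Function.Injective (sumIterates θ j) := sumIterates_injective
    (e.symm.injective.comp (inr_injective.comp hi)) (e.symm.injective.comp inl_injective) hdisj
  obtain ⟨E, hE⟩ := Module.Injective.exists_isCompl_range _ hΦ
  let eA := (LinearEquiv.prodOfIsComplRange hΦ hE).symm
  exact ⟨eA ≪≫ₗ (Finsupp.natShiftEquiv R Y).prodCongr (LinearEquiv.refl R E) ≪≫ₗ
    LinearEquiv.prodAssoc R _ _ _ ≪≫ₗ (LinearEquiv.refl R Y).prodCongr eA.symm⟩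

end Injective

theorem stmt16 (R : Type u) [Ring R] [IsNoetherianRing R]
    (A B : Type u) [AddCommGroup A] [Module R A] [AddCommGroup B] [Module R B]
    (hA : ModuleInjective R A) (hB : ModuleInjective R B)
    (hex : (∃ f : A →ₗ[R] B, Function.Injective f) ∧ ∃ g : B →ₗ[R] A, Function.Injective g) :
    Nonempty (A ≃ₗ[R] B) := by
  obtain ⟨⟨f, hf⟩, ⟨g, hg⟩⟩ := hex
  have := moduleInjective_iff_injective.1 hA
  have := moduleInjective_iff_injective.1 hB
  obtain ⟨Y, hY⟩ := Module.Injective.exists_isCompl_range f hf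
  obtain ⟨X, hX⟩ := Module.Injective.exists_isCompl_range g hg
  have : Module.Injective R Y := .of_isCompl_right hY
  let eB : (A × Y) ≃ₗ[R] B := .prodOfIsComplRange hf hY
  let eA : (B × X) ≃ₗ[R] A := .prodOfIsComplRange hg hX
  obtain ⟨e⟩ := nonempty_linearEquiv_prod_self_of_embedding
    (eA.symm ≪≫ₗ (eB.symm ≪≫ₗ LinearEquiv.prodComm R A Y).prodCongr (LinearEquiv.refl R X) ≪≫ₗ
      LinearEquiv.prodAssoc R Y A X) (inl R A X) inl_injective
  exact ⟨e ≪≫ₗ LinearEquiv.prodComm R Y A ≪≫ₗ eB⟩
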